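/- Let A, B : Fin n → ℝ and let F ⊆ Fin n × Fin n be a set of positions with |F| = f. The number of distinct permutations of F that can arise as the sorting order of the values ((i,j) ↦ A(i) + B(j)) restricted to F, taken over all choices of (A, B) ∈ ℝ^{2n} with all these values distinct, is at most the number of sign vectors realized by the (f choose 2) hyperplanes x_i + y_j − x_k − y_l = 0 in ℝ^{2n}, which is O((f choose 2)^{2n}). -/

import Mathlib

/-!
Relate each realizable order `e` to the sign vectors of its witnesses `(A, B)`. Every order has
a witness, and two orders sharing a sign vector coincide: the signs of the differences of
`v p = A p.1 + B p.2` fix the relative order of the values on `F`, and for `v` injective on `F`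
there is only one enumeration of `F` by `Fin |F|` along which `v` increases.
-/

open Set Function

theorem Set.ncard_le_ncard_of_forall_subsingleton {α β : Type*} {s : Set α} {t : Set β}
    (r : α → β → Prop) (hs : ∀ a ∈ s, ∃ b ∈ t, r a b)
    (ht : ∀ b ∈ t, {a ∈ s | r a b}.Subsingleton) (htf : t.Finite) : s.ncard ≤ t.ncard := by
  rcases s.eq_empty_or_nonempty with rfl | ⟨a₀, ha₀⟩
  · simp
  obtain ⟨b₀, -⟩ := hs a₀ ha₀
  have : Nonempty β := ⟨b₀⟩
  choose! g hgt hgr using hs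
  exact ncard_le_ncard_of_injOn g hgt
    (fun a ha a' ha' h ↦ ht _ (hgt a ha) ⟨ha, hgr a ha⟩ ⟨ha', h ▸ hgr a' ha'⟩) htf

theorem Real.sign_eq_neg_one_iff {x : ℝ} : Real.sign x = -1 ↔ x < 0 := by
  refine ⟨fun h ↦ ?_, Real.sign_of_neg⟩
  unfold Real.sign at h
  split_ifs at h with hneg hpos <;> norm_num at h
  exact hneg

theorem Real.lt_iff_lt_of_sign_sub_eq {a b c d : ℝ} (h : Real.sign (a - b) = Real.sign (c - d)) :
    a < b ↔ c < d := by
  rw [← sub_neg, ← sub_neg (a := c), ← Real.sign_eq_neg_one_iff, ← Real.sign_eq_neg_one_iff, h]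

theorem Real.finite_range_sign_comp (ι : Type*) [Finite ι] :
    (range fun x : ι → ℝ ↦ Real.sign ∘ x).Finite := by
  have hsign : (range Real.sign).Finite :=
    (toFinite {-1, 0, 1}).subset <| range_subset_iff.2 fun x ↦ by
      rcases Real.sign_apply_eq x with h | h | h <;> simp [h]
  exact (Finite.pi fun _ : ι ↦ hsign).subset <| by
    rintro _ ⟨x, rfl⟩ i -
    exact mem_range_self (x i)

theorem strictMono_comp_iff_of_sign_sub_eq {ι α : Type*} [Preorder ι] {s : Set α}
    {v w : α → ℝ} (hsign : ∀ p ∈ s, ∀ q ∈ s, Real.sign (v p - v q) = Real.sign (w p - w q))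
    {e : ι → α} (he : ∀ t, e t ∈ s) : StrictMono (v ∘ e) ↔ StrictMono (w ∘ e) :=
  forall₂_congr fun _ _ ↦ imp_congr_right fun _ ↦
    Real.lt_iff_lt_of_sign_sub_eq (hsign _ (he _) _ (he _))

theorem range_eq_of_injective_of_card_eq {α : Type*} {s : Finset α} {k : ℕ} {e : Fin k → α}
    (he : Injective e) (hs : ∀ t, e t ∈ s) (hk : s.card = k) : range e = s :=
  eq_of_subset_of_ncard_le (range_subset_iff.2 hs)
    (by rw [ncard_coe_finset, ncard_range_of_injective he, Nat.card_eq_fintype_card,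
      Fintype.card_fin, hk]) (toFinite _)

theorem eq_of_strictMono_comp_of_range_eq {ι α β : Type*} [LinearOrder ι] [WellFoundedLT ι]
    [Preorder β] {v : α → β} {e₁ e₂ : ι → α} (hv : InjOn v (range e₁))
    (hrange : range e₁ = range e₂) (h₁ : StrictMono (v ∘ e₁)) (h₂ : StrictMono (v ∘ e₂)) :
    e₁ = e₂ := by
  have hcomp : v ∘ e₁ = v ∘ e₂ := (h₁.range_inj h₂).1 (by rw [range_comp, range_comp, hrange])
  funext t
  exact hv (mem_range_self t) (hrange ▸ mem_range_self t) (congrFun hcomp t)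

noncomputable def signVector {α : Type*} (s : Finset α) (v : α → ℝ) : s × s → ℝ :=
  fun pq ↦ Real.sign (v pq.1 - v pq.2)

theorem eq_of_signVector_eq {α : Type*} {s : Finset α} {k : ℕ} (hk : s.card = k)
    {e₁ e₂ : Fin k → α} (hs₁ : ∀ t, e₁ t ∈ s) (hs₂ : ∀ t, e₂ t ∈ s) {v w : α → ℝ}
    (hv : InjOn v s) (hvw : signVector s v = signVector s w)
    (h₁ : StrictMono (v ∘ e₁)) (h₂ : StrictMono (w ∘ e₂)) : e₁ = e₂ := by
  have hsign : ∀ p ∈ s, ∀ q ∈ s, Real.sign (v p - v q) = Real.sign (w p - w q) :=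
    fun p hp q hq ↦ congrFun hvw (⟨p, hp⟩, ⟨q, hq⟩)
  have h₂' : StrictMono (v ∘ e₂) := (strictMono_comp_iff_of_sign_sub_eq hsign hs₂).2 h₂
  have hr₁ := range_eq_of_injective_of_card_eq h₁.injective.of_comp hs₁ hk
  have hr₂ := range_eq_of_injective_of_card_eq h₂.injective.of_comp hs₂ hk
  exact eq_of_strictMono_comp_of_range_eq (hr₁ ▸ hv) (hr₁.trans hr₂.symm) h₁ h₂'

/-- The number of realizable sorting orders of `(A+B)|_F` is at most the number of
sign vectors realized, over all inputs `(A,B) ∈ ℝ^{2n}`, by the `C(|F|,2)` hyperplanes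
`x_i + y_j - x_k - y_l = 0` (one for each pair of positions of `F`). -/
theorem realizable_orders_le_sign_vectors (n f : ℕ)
    (F : Finset (Fin n × Fin n)) (hF : F.card = f) :
    Set.ncard {e : Fin f → Fin n × Fin n |
        Function.Injective e ∧ (∀ t, e t ∈ F) ∧
        ∃ A B : Fin n → ℝ,
          (Set.InjOn (fun p : Fin n × Fin n => A p.1 + B p.2) ↑F) ∧
          StrictMono (fun t => A (e t).1 + B (e t).2)} ≤
      Set.ncard {σ : {p // p ∈ F} × {p // p ∈ F} → ℝ |
        ∃ A B : Fin n → ℝ, ∀ pq : {p // p ∈ F} × {p // p ∈ F},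
          σ pq = Real.sign
            (A (pq.1 : Fin n × Fin n).1 + B (pq.1 : Fin n × Fin n).2
              - A (pq.2 : Fin n × Fin n).1 - B (pq.2 : Fin n × Fin n).2)} := by
  refine ncard_le_ncard_of_forall_subsingleton
    (fun e σ ↦ ∃ A B : Fin n → ℝ, InjOn (fun p : Fin n × Fin n => A p.1 + B p.2) F ∧
      StrictMono (fun t => A (e t).1 + B (e t).2) ∧ σ = signVector F fun p => A p.1 + B p.2)
    ?_ ?_ ?_
  · rintro e ⟨-, -, A, B, hinj, hmono⟩
    exact ⟨_, ⟨A, B, fun pq ↦ by rw [signVector, sub_sub]⟩, A, B, hinj, hmono, rfl⟩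
  · rintro σ - e₁ ⟨⟨-, hs₁, -⟩, A, B, hinj, h₁, rfl⟩ e₂ ⟨⟨-, hs₂, -⟩, A', B', -, h₂, hσ⟩
    exact eq_of_signVector_eq hF hs₁ hs₂ hinj hσ h₁ h₂
  · refine (Real.finite_range_sign_comp _).subset ?_
    rintro σ ⟨A, B, hσ⟩
    exact ⟨_, (funext hσ).symm⟩
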